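/- arXiv:2605.23437 — 3 statements merged into one kernel-verified Lean document; each statement's English description precedes it below -/
import Mathlib

section
/- Let p ≥ 3 be prime, r = ⌊√p⌋, s = ⌊(p-2)/r⌋, and let 0 ≤ t ≤ p - r be an integer. Then in F_p^2, the union B of the main diagonal {(x,x) : x ∈ F_p} and the grid [t, t+r-1] × ({0, r, 2r, ..., sr} ∪ {p-1}) intersects every affine line of F_p^2. -/
lemma key_blocking_lemma (p r s t : ℕ) (hp3 : 3 ≤ p)
    (hr : r = Nat.sqrt p) (hs : s = (p - 2) / r) (c : ZMod p) :
    ∃ x y : ℕ, t ≤ x ∧ x ≤ t + r - 1 ∧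
      ((∃ k : ℕ, k ≤ s ∧ y = k * r) ∨ y = p - 1) ∧
      (y : ZMod p) = (x : ZMod p) + c := by
  have hp0 : 0 < p := by omega
  haveI : NeZero p := ⟨by omega⟩
  have hr1 : 1 ≤ r := by
    subst hr
    have := Nat.sqrt_pos.mpr hp0
    omega
  have hrp : r < p := by
    subst hr
    exact Nat.sqrt_lt_self (by omega)
  set c0 := c.val with hc0def
  have hc0 : c0 < p := ZMod.val_lt c
  set u := (t + c0) % p with hudef
  have hu : u < p := Nat.mod_lt _ hp0
  have hmod : Nat.ModEq p (t + c0) u := (Nat.mod_modEq (t + c0) p).symm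
  have hcc : ((c0 : ℕ) : ZMod p) = c := by
    simp [hc0def, ZMod.natCast_val, ZMod.cast_id]
  have cast_eq : ∀ i y : ℕ, u + i = y → (y : ZMod p) = ((t + i : ℕ) : ZMod p) + c := by
    intro i y hy
    have h1 : Nat.ModEq p (t + i + c0) y := by
      have h2 : Nat.ModEq p (t + c0 + i) (u + i) := hmod.add_right i
      have : t + i + c0 = t + c0 + i := by ring
      rw [this, hy] at *
      exact h2
    have h2 : ((t + i + c0 : ℕ) : ZMod p) = (y : ZMod p) :=
      (ZMod.natCast_eq_natCast_iff _ _ _).mpr h1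
    rw [← h2]
    push_cast [hcc]
    ring
  by_cases hcase : p - r ≤ u
  · -- window wraps or covers p-1, take y = p-1
    refine ⟨t + (p - 1 - u), p - 1, by omega, by omega, Or.inr rfl, ?_⟩
    exact cast_eq (p - 1 - u) (p - 1) (by omega)
  · -- take the smallest multiple of r that is ≥ u
    have hsr : p - r - 1 ≤ s * r := by
      have h1 : s * r + (p - 2) % r = p - 2 := by
        rw [hs]; exact Nat.div_add_mod' _ _
      have h2 : (p - 2) % r < r := Nat.mod_lt _ (by omega)
      omega
    have hu_le : u ≤ s * r := by omega
    set k := (u + r - 1) / r with hkdef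
    have hdm : k * r + (u + r - 1) % r = u + r - 1 := by
      rw [hkdef]; exact Nat.div_add_mod' _ _
    have hmr : (u + r - 1) % r < r := Nat.mod_lt _ (by omega)
    have hyu : u ≤ k * r := by omega
    have hyub : k * r ≤ u + r - 1 := by omega
    have hks : k ≤ s := by
      have h1 : k ≤ (s * r + (r - 1)) / r := by
        rw [hkdef]
        exact Nat.div_le_div_right (by omega)
      have h2 : (s * r + (r - 1)) / r = s := by
        have h3 : s * r + (r - 1) = (r - 1) + s * r := by ring
        rw [h3, Nat.add_mul_div_right _ _ (by omega : 0 < r),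
          Nat.div_eq_of_lt (by omega)]
        omega
      omega
    refine ⟨t + (k * r - u), k * r, by omega, by omega, Or.inl ⟨k, hks, rfl⟩, ?_⟩
    exact cast_eq (k * r - u) (k * r) (by omega)

/-- The union of the main diagonal and the grid
`[t, t+r-1] × ({0, r, 2r, ..., sr} ∪ {p-1})` blocks every affine line of `F_p^2`. -/
theorem diagonal_union_grid_blocking (p : ℕ) (hp : p.Prime) (hp3 : 3 ≤ p)
    (r s t : ℕ) (hr : r = Nat.sqrt p) (hs : s = (p - 2) / r) (ht : t ≤ p - r)
    (B : Set (ZMod p × ZMod p))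
    (hB : B = {q : ZMod p × ZMod p | q.1 = q.2} ∪
      {q : ZMod p × ZMod p |
        (∃ x : ℕ, t ≤ x ∧ x ≤ t + r - 1 ∧ q.1 = (x : ZMod p)) ∧
        ((∃ c : ℕ, c ≤ s ∧ q.2 = ((c * r : ℕ) : ZMod p)) ∨ q.2 = ((p - 1 : ℕ) : ZMod p))}) :
    ∀ a v : ZMod p × ZMod p, v ≠ 0 → ∃ x ∈ B, ∃ l : ZMod p, x = a + l • v := by
  haveI : Fact p.Prime := ⟨hp⟩
  intro a v hv
  by_cases hd : v.1 = v.2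
  · -- line parallel to the diagonal
    have hv1 : v.1 ≠ 0 := by
      intro h
      apply hv
      have h2 : v.2 = 0 := by rw [← hd]; exact h
      exact Prod.ext h h2
    obtain ⟨x, y, hx1, hx2, hy, hxy⟩ := key_blocking_lemma p r s t hp3 hr hs (a.2 - a.1)
    refine ⟨((x : ZMod p), (y : ZMod p)), ?_, ((x : ZMod p) - a.1) * v.1⁻¹, ?_⟩
    · rw [hB]
      right
      refine ⟨⟨x, hx1, hx2, rfl⟩, ?_⟩
      rcases hy with ⟨k, hk, hyk⟩ | hyk
      · exact Or.inl ⟨k, hk, by rw [hyk]⟩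
      · exact Or.inr (by rw [hyk])
    · have h1 : a.1 + ((x : ZMod p) - a.1) * v.1⁻¹ * v.1 = (x : ZMod p) := by
        field_simp
        ring
      have h2 : a.2 + ((x : ZMod p) - a.1) * v.1⁻¹ * v.2 = (y : ZMod p) := by
        rw [← hd]
        have : ((x : ZMod p) - a.1) * v.1⁻¹ * v.1 = (x : ZMod p) - a.1 := by
          field_simp
        rw [this, hxy]
        ring
      ext
      · simpa using h1.symm
      · simpa using h2.symm
  · -- line hits the diagonal
    have hne : v.1 - v.2 ≠ 0 := sub_ne_zero.mpr hd
    refine ⟨a + ((a.2 - a.1) * (v.1 - v.2)⁻¹) • v, ?_, (a.2 - a.1) * (v.1 - v.2)⁻¹, rfl⟩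
    rw [hB]
    left
    show a.1 + (a.2 - a.1) * (v.1 - v.2)⁻¹ * v.1 = a.2 + (a.2 - a.1) * (v.1 - v.2)⁻¹ * v.2
    field_simp
    ring
end

section
/- For all primes p ≥ 17, with r = ⌊√p⌋, s = ⌊(p-2)/r⌋, ℓ = ⌊√p/4⌋, the real number N = (p-ℓ-1)(p-1)^2 + ℓ(p^2 - p - (s+1)(r+ℓ) - ℓr + 1) + (s+1)ℓr satisfies N ≥ p^3 - 3p^2 + (1/8)p^{3/2} - (7/16)p. -/
/-!
Expanding, the count equals `(p - 1)^3 + ℓ p - ℓ² (s + r + 1)`. With `x = √p` we have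
`s + r + 1 ≤ 2x + 3` and `ℓ = x/4 - u` for some `u ∈ [0, 1]`; the resulting expression is concave
in `u`, so it is at least `(p - 1)^3 + x³/8 - 3p/16 - x/2 - 3`, which beats the claimed bound by
a margin of order `p`.
-/

lemma size_count_eq (p r s l : ℝ) :
    (p - l - 1) * (p - 1) ^ 2 + l * (p ^ 2 - p - (s + 1) * (r + l) - l * r + 1)
      + (s + 1) * l * r = (p - 1) ^ 3 + l * p - l ^ 2 * (s + r + 1) := by
  ring

lemma cube_sub_one_add_mul_sub_sq_mul_ge {p x l t : ℝ} (hx : 2 ≤ x) (hxp : x ^ 2 = p)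
    (hl₁ : x / 4 - 1 ≤ l) (hl₂ : l ≤ x / 4) (ht : t ≤ 2 * x + 3) :
    p ^ 3 - 3 * p ^ 2 + 1 / 8 * (p * x) - 7 / 16 * p ≤ (p - 1) ^ 3 + l * p - l ^ 2 * t := by
  have hlt : l ^ 2 * t ≤ l ^ 2 * (2 * x + 3) := mul_le_mul_of_nonneg_left ht (sq_nonneg l)
  subst hxp
  nlinarith [mul_nonneg (sub_nonneg.2 hl₂) (by linarith : 0 ≤ l - x / 4 + 1)]

lemma sqrt_sub_one_le_nat_sqrt (n : ℕ) : √n - 1 ≤ Nat.sqrt n := by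
  linarith [Real.real_sqrt_le_nat_sqrt_succ (a := n)]

lemma nat_sqrt_div_four_le (n : ℕ) : ((Nat.sqrt n / 4 : ℕ) : ℝ) ≤ √n / 4 :=
  Nat.cast_div_le.trans (by push_cast; gcongr; exact Real.nat_sqrt_le_real_sqrt)

lemma sqrt_div_four_sub_one_le (n : ℕ) : √n / 4 - 1 ≤ ((Nat.sqrt n / 4 : ℕ) : ℝ) := by
  have h : Nat.sqrt n ≤ 4 * (Nat.sqrt n / 4) + 3 := by omega
  have h' : (Nat.sqrt n : ℝ) ≤ 4 * ((Nat.sqrt n / 4 : ℕ) : ℝ) + 3 := by exact_mod_cast h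
  linarith [sqrt_sub_one_le_nat_sqrt n]

lemma sub_two_div_nat_sqrt_le (n : ℕ) (hn : 2 ≤ n) :
    (((n - 2) / Nat.sqrt n : ℕ) : ℝ) ≤ √n + 1 := by
  have hx : √n ^ 2 = n := Real.sq_sqrt n.cast_nonneg
  have hx1 : 1 < √n := Real.lt_sqrt_of_sq_lt (by norm_num; omega)
  have hmul : (((n - 2) / Nat.sqrt n : ℕ) : ℝ) * Nat.sqrt n ≤ n - 2 := by
    have h2 : ((n - 2 : ℕ) : ℝ) = n - 2 := by rw [Nat.cast_sub hn, Nat.cast_ofNat]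
    rw [← h2]; exact_mod_cast Nat.div_mul_le_self (n - 2) (Nat.sqrt n)
  nlinarith [sqrt_sub_one_le_nat_sqrt n, Nat.cast_nonneg (α := ℝ) ((n - 2) / Nat.sqrt n)]

theorem size_count_lower_bound_general (p : ℕ) (hp17 : 17 ≤ p)
    (r s l : ℕ) (hr : r = Nat.sqrt p) (hs : s = (p - 2) / r) (hl : l = Nat.sqrt p / 4) :
    ((p : ℝ) - l - 1) * ((p : ℝ) - 1) ^ 2
      + (l : ℝ) * ((p : ℝ) ^ 2 - p - ((s : ℝ) + 1) * ((r : ℝ) + l) - (l : ℝ) * r + 1)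
      + ((s : ℝ) + 1) * (l : ℝ) * (r : ℝ)
    ≥ (p : ℝ) ^ 3 - 3 * (p : ℝ) ^ 2 + (1 / 8) * ((p : ℝ) * Real.sqrt p)
        - (7 / 16) * (p : ℝ) := by
  subst hr hs hl
  have hx2 : (2 : ℝ) ≤ √p := Real.le_sqrt_of_sq_le (by norm_cast; omega)
  have hst : (((p - 2) / Nat.sqrt p : ℕ) : ℝ) + Nat.sqrt p + 1 ≤ 2 * √p + 3 := by
    linarith [sub_two_div_nat_sqrt_le p (by omega), Real.nat_sqrt_le_real_sqrt (a := p)]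
  rw [ge_iff_le, size_count_eq]
  exact cube_sub_one_add_mul_sub_sq_mul_ge hx2 (Real.sq_sqrt p.cast_nonneg)
    (sqrt_div_four_sub_one_le p) (nat_sqrt_div_four_le p) hst

/-- The size count of the construction satisfies the claimed lower bound. -/
theorem size_count_lower_bound (p : ℕ) (hp : p.Prime) (hp17 : 17 ≤ p)
    (r s l : ℕ) (hr : r = Nat.sqrt p) (hs : s = (p - 2) / r) (hl : l = Nat.sqrt p / 4) :
    ((p : ℝ) - l - 1) * ((p : ℝ) - 1) ^ 2
      + (l : ℝ) * ((p : ℝ) ^ 2 - p - ((s : ℝ) + 1) * ((r : ℝ) + l) - (l : ℝ) * r + 1)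
      + ((s : ℝ) + 1) * (l : ℝ) * (r : ℝ)
    ≥ (p : ℝ) ^ 3 - 3 * (p : ℝ) ^ 2 + (1 / 8) * ((p : ℝ) * Real.sqrt p)
        - (7 / 16) * (p : ℝ) :=
  size_count_lower_bound_general p hp17 r s l hr hs hl
end

section
/- Let p be a prime and B ⊆ F_p^2 a set meeting every affine line of F_p^2. Then |B| ≥ 2p - 1. -/
/-!
Translate a point `b ∈ B` to the origin. A line missing the origin is `{x | a ⬝ᵥ x = 1}` for some
`a ≠ 0`, so it meets `S = (B \ {b}) - b`, and the polynomial `∏ s ∈ S, (a ⬝ᵥ s - 1)` in the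
variable `a` vanishes at every `a ≠ 0` but not at `a = 0`. Since `∑ₓ f x = 0` over `K^n` whenever
`deg f < n (q - 1)` (the Chevalley–Warning summation), such a polynomial has degree at least
`n (q - 1)`; hence `|B| - 1 ≥ 2 (p - 1)` in the plane over `F_p`.
-/

open MvPolynomial Finset Matrix

section FiniteField

variable {K σ : Type*} [Field K] [Fintype K] [Fintype σ] [DecidableEq σ]

theorem MvPolynomial.le_totalDegree_of_eval_eq_zero_iff {f : MvPolynomial σ K}
    (hf : ∀ x, eval x f = 0 ↔ x ≠ 0) :
    (Fintype.card K - 1) * Fintype.card σ ≤ f.totalDegree := by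
  by_contra! hlt
  have hsum : ∑ x, eval x f = eval 0 f :=
    Fintype.sum_eq_single 0 fun x hx => (hf x).2 hx
  have h0 : eval 0 f ≠ 0 := fun h => (hf 0).1 h rfl
  exact h0 (hsum ▸ f.sum_eval_eq_zero hlt)

theorem le_card_of_forall_dotProduct_eq_one (S : Finset (σ → K))
    (hS : ∀ a : σ → K, a ≠ 0 → ∃ s ∈ S, a ⬝ᵥ s = 1) :
    (Fintype.card K - 1) * Fintype.card σ ≤ #S := by
  set f : MvPolynomial σ K := ∏ s ∈ S, (∑ i, s i • X i - 1)
  have heval : ∀ x, eval x f = ∏ s ∈ S, (x ⬝ᵥ s - 1) := by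
    simp [f, map_prod, dotProduct, mul_comm]
  have hdeg : f.totalDegree ≤ #S := by
    refine (totalDegree_finsetProd _ _).trans ?_
    rw [card_eq_sum_ones]
    refine sum_le_sum fun s _ => (totalDegree_sub_C_le _ _).trans ?_
    exact (totalDegree_finsetSum _ _).trans <| Finset.sup_le fun i _ =>
      (totalDegree_smul_le _ _).trans (totalDegree_X i).le
  refine le_trans ?_ hdeg
  refine MvPolynomial.le_totalDegree_of_eval_eq_zero_iff fun x => ⟨?_, fun hx => ?_⟩
  · rintro h rfl
    rw [heval] at h
    simp at h
  · obtain ⟨s, hs, hxs⟩ := hS x hx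
    exact (heval x).trans (prod_eq_zero hs (sub_eq_zero.2 hxs))

theorem le_ncard_of_forall_dotProduct_eq [Nonempty σ] {B : Set (σ → K)}
    (hB : ∀ a : σ → K, a ≠ 0 → ∀ c, ∃ x ∈ B, a ⬝ᵥ x = c) :
    (Fintype.card K - 1) * Fintype.card σ + 1 ≤ B.ncard := by
  classical
  obtain ⟨a, ha⟩ := exists_ne (0 : σ → K)
  obtain ⟨b, hb, -⟩ := hB a ha 0
  set S := (B.toFinset.erase b).image (· - b)
  have hS : ∀ a : σ → K, a ≠ 0 → ∃ s ∈ S, a ⬝ᵥ s = 1 := by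
    intro a ha
    obtain ⟨x, hx, hxb⟩ := hB a ha (a ⬝ᵥ b + 1)
    refine ⟨x - b, mem_image_of_mem _ (mem_erase.2 ⟨?_, Set.mem_toFinset.2 hx⟩), ?_⟩
    · rintro rfl
      simp at hxb
    · rw [dotProduct_sub, hxb, add_sub_cancel_left]
  calc _ ≤ #S + 1 := by grw [le_card_of_forall_dotProduct_eq_one S hS]
    _ ≤ #(B.toFinset.erase b) + 1 := by grw [card_image_le]
    _ = B.ncard := by
      rw [card_erase_add_one (Set.mem_toFinset.2 hb), Set.ncard_eq_toFinset_card']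

end FiniteField

theorem exists_dotProduct_eq_of_forall_exists_mem_line {K : Type*} [Field K]
    {B : Set (Fin 2 → K)} (hB : ∀ a v : Fin 2 → K, v ≠ 0 → ∃ x ∈ B, ∃ t : K, x = a + t • v)
    {a : Fin 2 → K} (ha : a ≠ 0) (c : K) : ∃ x ∈ B, a ⬝ᵥ x = c := by
  obtain ⟨i, hi⟩ := Function.ne_iff.1 ha
  have hv : ![-a 1, a 0] ≠ 0 := by
    contrapose! ha
    ext j
    fin_cases j
    · simpa using congrFun ha 1
    · simpa using congrFun ha 0
  obtain ⟨x, hx, t, rfl⟩ := hB (Pi.single i (c / a i)) _ hv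
  refine ⟨_, hx, ?_⟩
  rw [dotProduct_add, dotProduct_single, mul_div_cancel₀ _ hi, dotProduct_smul]
  simp [dotProduct, Fin.sum_univ_two, mul_comm]

/-- Jamison–Brouwer–Schrijver: an affine blocking set in `F_p^2` has at least `2p-1` points. -/
theorem jamison_brouwer_schrijver (p : ℕ) (hp : p.Prime)
    (B : Set (ZMod p × ZMod p))
    (hB : ∀ a v : ZMod p × ZMod p, v ≠ 0 →
      ∃ x ∈ B, ∃ t : ZMod p, x = a + t • v) :
    2 * p - 1 ≤ B.ncard := by
  have := Fact.mk hp
  let e := LinearEquiv.finTwoArrow (ZMod p) (ZMod p)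
  have hlines : ∀ a v : Fin 2 → ZMod p, v ≠ 0 → ∃ x ∈ e ⁻¹' B, ∃ t : ZMod p, x = a + t • v := by
    intro a v hv
    obtain ⟨x, hx, t, hxt⟩ := hB (e a) (e v) (e.map_ne_zero_iff.2 hv)
    exact ⟨a + t • v, by simpa [hxt] using hx, t, rfl⟩
  have hcard := le_ncard_of_forall_dotProduct_eq fun a ha =>
    exists_dotProduct_eq_of_forall_exists_mem_line hlines ha
  rw [ZMod.card, Fintype.card_fin,
    Set.ncard_preimage_of_injective_subset_range e.injective (by simp)] at hcard
  omega
end
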